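/- arXiv:1401.3132 — 5 statements merged into one kernel-verified Lean document; each statement's English description precedes it below -/
import Mathlib

section
/- For any sets X and Y of countable limit ordinals, the linear orders L_X and L_Y are order-isomorphic if and only if X = Y. -/
open Ordinal Cardinal

/-- The first uncountable ordinal `ω₁`. -/
noncomputable def omega1' : Ordinal := (Cardinal.aleph 1).ord

/-- The underlying set of the linear order `L_X`:
`{(α, m) ∈ ω₁ × ω : α ∉ X → m = 0}`. -/
def LX (X : Set Ordinal) : Type 1 :=
  {p : {o : Ordinal // o < omega1'} × ℕ // p.1.1 ∉ X → p.2 = 0}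

/-- The order on `L_X`: `(α,m) ≺ (β,n)` iff `α < β`, or `α = β ∧ m = 0 < n`,
or `α = β ∧ m > n > 0`. -/
def LXlt (X : Set Ordinal) : LX X → LX X → Prop := fun p q =>
  p.1.1.1 < q.1.1.1 ∨
  (p.1.1 = q.1.1 ∧ p.1.2 = 0 ∧ 0 < q.1.2) ∨
  (p.1.1 = q.1.1 ∧ q.1.2 < p.1.2 ∧ 0 < q.1.2)

/-!
The points of `L_X` without an immediate predecessor are exactly the `(δ, 0)` with `δ` zero or a
limit, so they form a copy of a well-order that does not depend on `X`. An isomorphism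
`L_X ≅ L_Y` preserves this set, hence restricts to an automorphism of a well-order, which is the
identity: it fixes every `(δ, 0)` with `δ` a limit. Such a point has no immediate successor in
`L_X` iff `δ ∈ X`, and this is also preserved, so `X ⊆ Y`, and `Y ⊆ X` by symmetry.
-/

open Order

namespace OrderIso

variable {α β : Type*} [Preorder α] [Preorder β]

theorem isSuccPrelimit_apply_iff (f : α ≃o β) {a : α} :
    IsSuccPrelimit (f a) ↔ IsSuccPrelimit a := by
  simp only [IsSuccPrelimit, f.surjective.forall, apply_covBy_apply_iff]

theorem isPredPrelimit_apply_iff (f : α ≃o β) {a : α} :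
    IsPredPrelimit (f a) ↔ IsPredPrelimit a := by
  simp only [IsPredPrelimit, f.surjective.forall, apply_covBy_apply_iff]

theorem apply_comp_eq_of_mem_range_iff {γ : Type*} [LinearOrder γ] [WellFoundedLT γ]
    (f : α ≃o β) (g : γ ↪o α) (h : γ ↪o β)
    (hgh : ∀ a, f a ∈ Set.range h ↔ a ∈ Set.range g)
    (c : γ) : f (g c) = h c := by
  induction c using WellFoundedLT.induction with
  | _ c ih =>
  obtain ⟨d, hd⟩ := (hgh (g c)).2 ⟨c, rfl⟩
  obtain ⟨e, he⟩ := (hgh (f.symm (h c))).1 (by simp)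
  rcases lt_trichotomy d c with hdc | rfl | hcd
  · exact absurd (g.injective (f.injective ((ih d hdc).trans hd))) hdc.ne
  · exact hd.symm
  · have hec : e < c := by
      rw [← g.lt_iff_lt, he, ← f.lt_iff_lt, f.apply_symm_apply, ← hd]
      exact h.lt_iff_lt.2 hcd
    have hce := ih e hec
    rw [he, f.apply_symm_apply] at hce
    exact absurd (h.injective hce) hec.ne'

end OrderIso

theorem succ_lt_omega1 {δ : Ordinal} (h : δ < omega1') : succ δ < omega1' :=
  (isSuccLimit_ord (aleph0_le_aleph 1)).succ_lt h

namespace LX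

variable {X Y : Set Ordinal}

def ord (x : LX X) : Ordinal := x.1.1.1

def idx (x : LX X) : ℕ := x.1.2

def mk (δ : Ordinal) (hδ : δ < omega1') (n : ℕ) (h : δ ∉ X → n = 0) : LX X :=
  ⟨⟨⟨δ, hδ⟩, n⟩, h⟩

def ofOrd (δ : Ordinal) (hδ : δ < omega1') : LX X := mk δ hδ 0 fun _ => rfl

@[simp] theorem idx_mk {δ hδ n h} : (mk δ hδ n h : LX X).idx = n := rfl

@[simp] theorem ord_ofOrd {δ hδ} : (ofOrd δ hδ : LX X).ord = δ := rfl

@[simp] theorem idx_ofOrd {δ hδ} : (ofOrd δ hδ : LX X).idx = 0 := rfl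

theorem ord_lt_omega1 (x : LX X) : x.ord < omega1' := x.1.1.2

theorem ord_mem_of_idx_ne_zero {x : LX X} (h : x.idx ≠ 0) : x.ord ∈ X :=
  not_not.1 (mt x.2 h)

theorem ext {x y : LX X} (hord : x.ord = y.ord) (hidx : x.idx = y.idx) : x = y :=
  Subtype.ext (Prod.ext (Subtype.ext hord) hidx)

/-- The copy of `ω` inserted after `α` is ordered as `0 < ⋯ < 2 < 1`, so `≺` is the
lexicographic order on `(ord, idx ≠ 0, toDual idx)`. -/
def key (x : LX X) : Ordinal ×ₗ Bool ×ₗ ℕᵒᵈ :=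
  toLex (x.ord, toLex (decide (x.idx ≠ 0), OrderDual.toDual x.idx))

theorem key_injective : Function.Injective (key (X := X)) := by
  intro x y h
  simp only [key, toLex_inj, Prod.mk.injEq, OrderDual.toDual_inj] at h
  exact ext h.1 h.2.2

noncomputable instance : LinearOrder (LX X) := LinearOrder.lift' key key_injective

theorem lt_iff {x y : LX X} : x < y ↔ x.ord < y.ord ∨
    x.ord = y.ord ∧ (x.idx = 0 ∧ 0 < y.idx ∨ y.idx < x.idx ∧ 0 < y.idx) := by
  change key x < key y ↔ _
  simp only [key, Prod.Lex.toLex_lt_toLex, OrderDual.toDual_lt_toDual]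
  refine or_congr_right (and_congr_right fun _ => ?_)
  by_cases hx : x.idx = 0 <;> by_cases hy : y.idx = 0 <;> simp [hx, hy] <;> omega

theorem lt_iff_LXlt {x y : LX X} : x < y ↔ LXlt X x y := by
  simp only [lt_iff, LXlt, ord, idx, Subtype.ext_iff, and_or_left]

theorem lt_of_ord_lt {x y : LX X} (h : x.ord < y.ord) : x < y := lt_iff.2 (Or.inl h)

theorem lt_iff_of_ord_eq {x y : LX X} (h : x.ord = y.ord) :
    x < y ↔ x.idx = 0 ∧ 0 < y.idx ∨ y.idx < x.idx ∧ 0 < y.idx := by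
  simp [lt_iff, h]

theorem lt_ofOrd_iff {x : LX X} {δ hδ} : x < ofOrd δ hδ ↔ x.ord < δ := by
  simp [lt_iff]

theorem ofOrd_lt_iff {x : LX X} {δ hδ} :
    ofOrd δ hδ < x ↔ δ < x.ord ∨ δ = x.ord ∧ 0 < x.idx := by
  simp [lt_iff]

theorem ord_mono : Monotone (ord (X := X)) := fun _ _ h =>
  h.eq_or_lt.elim (fun e => e ▸ le_rfl) fun h => (lt_iff.1 h).elim le_of_lt fun h => h.1.le

theorem mk_idx_succ_covBy {x : LX X} (h : x.idx ≠ 0) :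
    mk x.ord x.ord_lt_omega1 (x.idx + 1) (absurd (ord_mem_of_idx_ne_zero h)) ⋖ x := by
  set p : LX X := mk x.ord x.ord_lt_omega1 (x.idx + 1) (absurd (ord_mem_of_idx_ne_zero h))
  have hp : p.ord = x.ord := rfl
  refine ⟨(lt_iff_of_ord_eq hp).2 (Or.inr ⟨by simp [p], Nat.pos_of_ne_zero h⟩),
    fun c h1 h2 => ?_⟩
  have hc : p.ord = c.ord := le_antisymm (ord_mono h1.le) ((ord_mono h2.le).trans hp.ge)
  have h1 := (lt_iff_of_ord_eq hc).1 h1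
  have h2 := (lt_iff_of_ord_eq (hc.symm.trans hp)).1 h2
  simp only [p, idx_mk] at h1
  omega

theorem ofOrd_covBy_ofOrd_succ {γ : Ordinal} (hγ : γ < omega1') (hγX : γ ∉ X) :
    (ofOrd γ hγ : LX X) ⋖ ofOrd (succ γ) (succ_lt_omega1 hγ) := by
  refine ⟨lt_of_ord_lt (lt_succ γ), fun c h1 h2 => ?_⟩
  have hc : c.ord ≤ γ := lt_succ_iff.1 (lt_ofOrd_iff.1 h2)
  rcases ofOrd_lt_iff.1 h1 with h | ⟨rfl, hidx⟩
  · exact h.not_ge hc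
  · exact hγX (ord_mem_of_idx_ne_zero hidx.ne')

theorem mk_one_covBy_ofOrd_succ {γ : Ordinal} (hγ : γ < omega1') (hγX : γ ∈ X) :
    (mk γ hγ 1 (absurd hγX) : LX X) ⋖ ofOrd (succ γ) (succ_lt_omega1 hγ) := by
  refine ⟨lt_of_ord_lt (lt_succ γ), fun c h1 h2 => ?_⟩
  have hc : c.ord ≤ γ := lt_succ_iff.1 (lt_ofOrd_iff.1 h2)
  rcases lt_iff.1 h1 with h | ⟨-, h⟩
  · exact h.not_ge hc
  · simp only [idx_mk] at h
    omega

theorem isSuccPrelimit_iff {x : LX X} :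
    IsSuccPrelimit x ↔ x.idx = 0 ∧ IsSuccPrelimit x.ord := by
  constructor
  · intro hx
    have hidx : x.idx = 0 := by
      by_contra h
      exact hx _ (mk_idx_succ_covBy h)
    refine ⟨hidx, fun γ hγ => ?_⟩
    have hγω : γ < omega1' := hγ.lt.trans x.ord_lt_omega1
    obtain rfl : x = ofOrd (succ γ) (succ_lt_omega1 hγω) := ext hγ.succ_eq.symm hidx
    by_cases hγX : γ ∈ X
    · exact hx _ (mk_one_covBy_ofOrd_succ hγω hγX)
    · exact hx _ (ofOrd_covBy_ofOrd_succ hγω hγX)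
  · rintro ⟨hidx, hord⟩ w hw
    have hwx : w.ord < x.ord := by simpa [hidx] using lt_iff.1 hw.lt
    have hsucc : succ w.ord < x.ord := hord.succ_lt hwx
    exact hw.2 (lt_of_ord_lt (lt_succ w.ord) : w < ofOrd _ (hsucc.trans x.ord_lt_omega1))
      (lt_of_ord_lt hsucc)

theorem isPredPrelimit_ofOrd_iff {δ : Ordinal} {hδ : δ < omega1'} :
    IsPredPrelimit (ofOrd δ hδ : LX X) ↔ δ ∈ X := by
  refine ⟨fun h => by_contra fun hδX => h _ (ofOrd_covBy_ofOrd_succ hδ hδX),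
    fun hδX b hb => ?_⟩
  rcases ofOrd_lt_iff.1 hb.lt with hlt | ⟨rfl, hidx⟩
  · exact hb.2 (ofOrd_lt_iff.2 (Or.inr ⟨rfl, one_pos⟩) : _ < mk δ hδ 1 (absurd hδX))
      (lt_of_ord_lt hlt)
  · have := congrArg idx (hb.unique_left (mk_idx_succ_covBy hidx.ne'))
    simp at this

abbrev CountablePrelimit : Type 1 := {δ : Ordinal // δ < omega1' ∧ IsSuccPrelimit δ}

noncomputable def limitEmb : CountablePrelimit ↪o LX X :=
  OrderEmbedding.ofStrictMono (fun c => ofOrd c.1 c.2.1) fun _ _ h => lt_of_ord_lt h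

theorem mem_range_limitEmb_iff {x : LX X} : x ∈ Set.range limitEmb ↔ IsSuccPrelimit x := by
  constructor
  · rintro ⟨c, rfl⟩
    exact isSuccPrelimit_iff.2 ⟨rfl, c.2.2⟩
  · intro h
    obtain ⟨hidx, hord⟩ := isSuccPrelimit_iff.1 h
    exact ⟨⟨x.ord, x.ord_lt_omega1, hord⟩, ext rfl hidx.symm⟩

noncomputable def orderIsoOfRelIso (f : LXlt X ≃r LXlt Y) : LX X ≃o LX Y :=
  OrderIso.ofRelIsoLT ⟨f.toEquiv, by simp only [lt_iff_LXlt]; exact f.map_rel_iff⟩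

theorem subset_of_relIso (hX : ∀ o ∈ X, o < omega1' ∧ IsSuccLimit o)
    (f : LXlt X ≃r LXlt Y) : X ⊆ Y := by
  intro δ hδX
  let e := orderIsoOfRelIso f
  let c : CountablePrelimit := ⟨δ, (hX δ hδX).1, (hX δ hδX).2.isSuccPrelimit⟩
  have hfix : e (limitEmb c) = limitEmb c :=
    e.apply_comp_eq_of_mem_range_iff _ _
      (fun _ => by simp only [mem_range_limitEmb_iff, e.isSuccPrelimit_apply_iff]) c
  have hc : IsPredPrelimit (limitEmb c : LX X) := isPredPrelimit_ofOrd_iff.2 hδX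
  rw [← e.isPredPrelimit_apply_iff, hfix] at hc
  exact isPredPrelimit_ofOrd_iff.1 hc

end LX

/-- For sets `X`, `Y` of countable limit ordinals, `L_X ≅ L_Y` iff `X = Y`. -/
theorem stmt6 (X Y : Set Ordinal)
    (hX : ∀ o ∈ X, o < omega1' ∧ Order.IsSuccLimit o)
    (hY : ∀ o ∈ Y, o < omega1' ∧ Order.IsSuccLimit o) :
    Nonempty (LXlt X ≃r LXlt Y) ↔ X = Y := by
  refine ⟨fun ⟨f⟩ => ?_, fun h => h ▸ ⟨RelIso.refl _⟩⟩
  exact (LX.subset_of_relIso hX f).antisymm (LX.subset_of_relIso hY f.symm)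
end

section
/- In the linear order L_X with β ∈ X a limit ordinal, the open interval ((β,0), (β+ω, 0)) has the order type of the integers ℤ. -/
open Ordinal Cardinal

/-!
The points of the interval are `(β, m)` for `m ≥ 1`, listed in decreasing order of `m`, followed
by `(β + k, 0)` for `k ≥ 1`: no `β + k` with `k ≥ 1` lies in `X`, because it is a successor.
Sending `-(m + 1) ↦ (β, m + 1)` and `k ↦ (β + (k + 1), 0)` is therefore an isomorphism from `ℤ`.
-/

open Order

namespace Ordinal

theorem not_isSuccLimit_add_natCast_succ (β : Ordinal) (n : ℕ) :
    ¬ IsSuccLimit (β + (n + 1 : ℕ)) := by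
  rw [Nat.cast_succ, ← add_assoc, ← succ_eq_add_one]
  exact not_isSuccLimit_succ _

theorem exists_add_natCast_eq_of_lt_add_omega0 {α β : Ordinal} (hβα : β ≤ α) (hα : α < β + ω) :
    ∃ n : ℕ, β + n = α := by
  obtain ⟨n, hn⟩ := lt_omega0.mp (sub_lt_of_lt_add hα omega0_pos)
  exact ⟨n, by rw [← hn, Ordinal.add_sub_cancel_of_le hβα]⟩

end Ordinal

namespace LX

variable {X : Set Ordinal}

instance : Std.Irrefl (LXlt X) where
  irrefl p := by
    rintro (h | ⟨-, h, h'⟩ | ⟨-, h, -⟩)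
    · exact lt_irrefl _ h
    · omega
    · exact lt_irrefl _ h

variable {β : Ordinal} (hβ : β ∈ X) (hβω : β + ω < omega1')

def ofInt : ℤ → LX X
  | .ofNat k =>
    ⟨(⟨β + (k + 1 : ℕ), ((add_lt_add_iff_left β).mpr (natCast_lt_omega0 _)).trans hβω⟩, 0),
      fun _ => rfl⟩
  | .negSucc k => ⟨(⟨β, le_self_add.trans_lt hβω⟩, k + 1), fun h => absurd hβ h⟩

theorem ofInt_lt_ofInt_iff {a b : ℤ} : LXlt X (ofInt hβ hβω a) (ofInt hβ hβω b) ↔ a < b := by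
  cases a <;> cases b <;> simp [ofInt, LXlt, Int.negSucc_eq] <;> omega

def ofIntEmbedding : ((· < ·) : ℤ → ℤ → Prop) ↪r LXlt X where
  toFun := ofInt hβ hβω
  inj' := injective_of_increasing _ _ _ (ofInt_lt_ofInt_iff hβ hβω).2
  map_rel_iff' := ofInt_lt_ofInt_iff hβ hβω

theorem lt_ofInt (hβ1 : β < omega1') (n : ℤ) :
    LXlt X ⟨(⟨β, hβ1⟩, 0), fun _ => rfl⟩ (ofInt hβ hβω n) := by
  cases n with
  | ofNat k => exact Or.inl (lt_add_of_pos_right β (by exact_mod_cast k.succ_pos))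
  | negSucc k => exact Or.inr (Or.inl ⟨rfl, rfl, k.succ_pos⟩)

theorem ofInt_lt (n : ℤ) : LXlt X (ofInt hβ hβω n) ⟨(⟨β + ω, hβω⟩, 0), fun _ => rfl⟩ := by
  cases n with
  | ofNat k => exact Or.inl ((add_lt_add_iff_left β).mpr (natCast_lt_omega0 _))
  | negSucc k => exact Or.inl (lt_add_of_pos_right β omega0_pos)

theorem exists_ofInt_eq (hX : ∀ o ∈ X, IsSuccLimit o) (hβ1 : β < omega1') (p : LX X)
    (h₁ : LXlt X ⟨(⟨β, hβ1⟩, 0), fun _ => rfl⟩ p)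
    (h₂ : LXlt X p ⟨(⟨β + ω, hβω⟩, 0), fun _ => rfl⟩) :
    ∃ n : ℤ, ofInt hβ hβω n = p := by
  obtain ⟨⟨⟨α, hα⟩, m⟩, hm⟩ := p
  rcases h₁ with hβα | ⟨hαβ, -, hm₀⟩ | ⟨-, hm₀, -⟩
  · have hαω : α < β + ω := by
      rcases h₂ with h | ⟨-, -, h⟩ | ⟨-, -, h⟩
      · exact h
      all_goals exact absurd h (lt_irrefl 0)
    obtain ⟨n, rfl⟩ := Ordinal.exists_add_natCast_eq_of_lt_add_omega0 hβα.le hαω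
    obtain ⟨k, rfl⟩ : ∃ k, n = k + 1 :=
      Nat.exists_eq_succ_of_ne_zero (by rintro rfl; simp at hβα)
    obtain rfl : m = 0 := hm fun h => Ordinal.not_isSuccLimit_add_natCast_succ β k (hX _ h)
    exact ⟨k, rfl⟩
  · cases hαβ
    obtain ⟨k, rfl⟩ := Nat.exists_eq_succ_of_ne_zero hm₀.ne'
    exact ⟨.negSucc k, rfl⟩
  · exact absurd hm₀ (Nat.not_lt_zero _)

end LX

/-- For `β ∈ X` a limit ordinal, the open interval `((β,0), (β+ω,0))` of `L_X`
has the order type of the integers. -/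
theorem stmt8 (X : Set Ordinal)
    (hX : ∀ o ∈ X, o < omega1' ∧ Order.IsSuccLimit o)
    (β : Ordinal) (hβ : β ∈ X) (hβ1 : β < omega1')
    (hβω : β + Ordinal.omega0 < omega1') :
    Nonempty
      ((fun p q :
          {p : LX X // LXlt X ⟨(⟨β, hβ1⟩, 0), fun _ => rfl⟩ p ∧
             LXlt X p ⟨(⟨β + Ordinal.omega0, hβω⟩, 0), fun _ => rfl⟩} =>
            LXlt X p.1 q.1) ≃r ((· < ·) : ℤ → ℤ → Prop)) := by
  let interval : Set (LX X) := {p | LXlt X ⟨(⟨β, hβ1⟩, 0), fun _ => rfl⟩ p ∧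
    LXlt X p ⟨(⟨β + Ordinal.omega0, hβω⟩, 0), fun _ => rfl⟩}
  let toInterval := (LX.ofIntEmbedding hβ hβω).codRestrict interval
    fun n => ⟨LX.lt_ofInt hβ hβω hβ1 n, LX.ofInt_lt hβ hβω n⟩
  have hsurj : Function.Surjective toInterval := fun ⟨p, h₁, h₂⟩ =>
    let ⟨n, hn⟩ := LX.exists_ofInt_eq hβ hβω (fun o ho => (hX o ho).2) hβ1 p h₁ h₂
    ⟨n, Subtype.ext hn⟩
  exact ⟨(RelIso.ofSurjective toInterval hsurj).symm⟩
end

section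
/- Let F ⊆ ω and let T be a linearly ordered index set with associated sequences A^t = ⟨[a^t_n, b^t_n] : n ∈ ω⟩ of closed intervals. If for every finite decreasing sequence ⟨t_i : i < l⟩ in T, every m ∈ ω, and F there exists an m-dense function, and F = F₀ ∪ F₁, then for each fixed decreasing sequence ⟨t_i : i < l⟩ and m ∈ ω: every function φ that is 2m-dense for F and ⟨t_i : i < l⟩ induces a function that is m-dense for F₀ or for F₁ and ⟨t_i : i < l⟩. -/
open Set

/-- `φ` is `m`-dense for `F` and the decreasing sequence `⟨t i : i < l⟩`
(with respect to the interval sequences `A^s = ⟨[a s n, b s n] : n ∈ ω⟩`):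
`φ` is defined on sequences in `m^{≤l}` (encoded as lists), its values at
maximal nodes lie in `F`, successor values are strictly increasing, and the
intervals indexed along the branches are nested. -/
def mDense {T : Type*} (a b : T → ℕ → ℤ) (F : Set ℕ) (l m : ℕ) (t : ℕ → T)
    (φ : List ℕ → ℕ) : Prop :=
  (∀ ρ : List ℕ, ρ.length = l → (∀ x ∈ ρ, x < m) → φ ρ ∈ F) ∧
  (∀ ρ : List ℕ, ρ.length < l → (∀ x ∈ ρ, x < m) →
      ∀ i j, i < j → j < m → φ (ρ ++ [i]) < φ (ρ ++ [j])) ∧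
  (∀ k, k + 1 < l → ∀ ρ : List ℕ, ρ.length = k → (∀ x ∈ ρ, x < m) → ∀ i < m,
      Icc (a (t (k+1)) (φ (ρ ++ [i]))) (b (t (k+1)) (φ (ρ ++ [i]))) ⊆
        Icc (a (t k) (φ ρ)) (b (t k) (φ ρ)))

/-- Pigeonhole: among `2m` boolean values one color occurs at least `m` times. -/
private lemma pigeon (m : ℕ) (f : ℕ → Bool) :
    ∃ c, m ≤ ((Finset.range (2*m)).filter (fun i => f i = c)).card := by
  by_contra h
  push_neg at h
  have h1 := h true
  have h2 := h false
  have key := Finset.card_filter_add_card_filter_not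
    (s := Finset.range (2*m)) (p := fun i => f i = true)
  have heq : (Finset.range (2*m)).filter (fun i => ¬ f i = true)
      = (Finset.range (2*m)).filter (fun i => f i = false) := by
    apply Finset.filter_congr
    intro i _
    simp
  rw [heq, Finset.card_range] at key
  omega

open Classical in
/-- `col F₀ m φ d s` : the color of node `s` at remaining depth `d`; at leaves it
records membership of `φ s` in `F₀`, at internal nodes it is a majority color
among the `2m` children. -/
private noncomputable def col (F₀ : Set ℕ) (m : ℕ) (φ : List ℕ → ℕ) : ℕ → List ℕ → Bool
  | 0, s => if φ s ∈ F₀ then true else false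
  | d+1, s => Classical.choose (pigeon m (fun i => col F₀ m φ d (s ++ [i])))

/-- `sel F₀ m φ d s i` : the `i`-th chosen child (among `2m`) of node `s` whose
subtree at depth `d` carries the majority color. -/
private noncomputable def sel (F₀ : Set ℕ) (m : ℕ) (φ : List ℕ → ℕ) (d : ℕ)
    (s : List ℕ) (i : ℕ) : ℕ :=
  if h : i < m then
    Finset.orderEmbOfCardLe _
      (Classical.choose_spec (pigeon m (fun j => col F₀ m φ d (s ++ [j])))) ⟨i, h⟩
  else 0

private lemma sel_mem {F₀ : Set ℕ} {m : ℕ} {φ : List ℕ → ℕ} {d : ℕ} {s : List ℕ}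
    {i : ℕ} (h : i < m) :
    sel F₀ m φ d s i ∈ (Finset.range (2*m)).filter
      (fun j => col F₀ m φ d (s ++ [j])
        = Classical.choose (pigeon m (fun j => col F₀ m φ d (s ++ [j])))) := by
  rw [sel, dif_pos h]
  exact Finset.orderEmbOfCardLe_mem _ _ _

private lemma sel_lt {F₀ : Set ℕ} {m : ℕ} {φ : List ℕ → ℕ} {d : ℕ} {s : List ℕ}
    {i : ℕ} (h : i < m) : sel F₀ m φ d s i < 2*m := by
  have := sel_mem (F₀ := F₀) (φ := φ) (d := d) (s := s) h
  simp only [Finset.mem_filter, Finset.mem_range] at this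
  exact this.1

private lemma col_sel {F₀ : Set ℕ} {m : ℕ} {φ : List ℕ → ℕ} {d : ℕ} {s : List ℕ}
    {i : ℕ} (h : i < m) :
    col F₀ m φ d (s ++ [sel F₀ m φ d s i]) = col F₀ m φ (d+1) s := by
  have := sel_mem (F₀ := F₀) (φ := φ) (d := d) (s := s) h
  simp only [Finset.mem_filter, Finset.mem_range] at this
  rw [this.2]
  rfl

private lemma sel_strictMono {F₀ : Set ℕ} {m : ℕ} {φ : List ℕ → ℕ} {d : ℕ}
    {s : List ℕ} {i j : ℕ} (hij : i < j) (hj : j < m) :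
    sel F₀ m φ d s i < sel F₀ m φ d s j := by
  have hi : i < m := lt_trans hij hj
  rw [sel, dif_pos hi, sel, dif_pos hj]
  exact (Finset.orderEmbOfCardLe _ _).strictMono (by exact hij)

/-- `emb F₀ m φ d s ρ` : follow the path `ρ` through the selected children,
starting at node `s` with remaining depth `d`. -/
private noncomputable def emb (F₀ : Set ℕ) (m : ℕ) (φ : List ℕ → ℕ) :
    ℕ → List ℕ → List ℕ → List ℕ
  | _, s, [] => s
  | d, s, i :: ρ => emb F₀ m φ (d-1) (s ++ [sel F₀ m φ (d-1) s i]) ρ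

private lemma emb_length (F₀ : Set ℕ) (m : ℕ) (φ : List ℕ → ℕ) :
    ∀ (ρ : List ℕ) (d : ℕ) (s : List ℕ),
      (emb F₀ m φ d s ρ).length = s.length + ρ.length := by
  intro ρ
  induction ρ with
  | nil => intro d s; simp [emb]
  | cons i ρ ih =>
    intro d s
    rw [emb, ih]
    simp
    omega

private lemma emb_mem (F₀ : Set ℕ) (m : ℕ) (φ : List ℕ → ℕ) :
    ∀ (ρ : List ℕ) (d : ℕ) (s : List ℕ), (∀ x ∈ ρ, x < m) →
      ∀ x ∈ emb F₀ m φ d s ρ, x ∈ s ∨ x < 2*m := by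
  intro ρ
  induction ρ with
  | nil => intro d s _ x hx; exact Or.inl hx
  | cons i ρ ih =>
    intro d s hρ x hx
    rw [emb] at hx
    have hi : i < m := hρ i (by simp)
    rcases ih (d-1) (s ++ [sel F₀ m φ (d-1) s i])
        (fun y hy => hρ y (by simp [hy])) x hx with h | h
    · rcases List.mem_append.1 h with h | h
      · exact Or.inl h
      · simp at h
        subst h
        exact Or.inr (sel_lt hi)
    · exact Or.inr h

private lemma col_emb (F₀ : Set ℕ) (m : ℕ) (φ : List ℕ → ℕ) :
    ∀ (ρ : List ℕ) (d : ℕ) (s : List ℕ), ρ.length ≤ d → (∀ x ∈ ρ, x < m) →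
      col F₀ m φ (d - ρ.length) (emb F₀ m φ d s ρ) = col F₀ m φ d s := by
  intro ρ
  induction ρ with
  | nil => intro d s _ _; simp [emb]
  | cons i ρ ih =>
    intro d s hlen hρ
    obtain ⟨d', rfl⟩ : ∃ d', d = d' + 1 := by
      refine ⟨d - 1, ?_⟩
      simp at hlen
      omega
    have hi : i < m := hρ i (by simp)
    have h1 : (d' + 1) - (i :: ρ).length = d' - ρ.length := by simp
    rw [emb, h1]
    have h2 : d' + 1 - 1 = d' := rfl
    rw [h2]
    rw [ih d' (s ++ [sel F₀ m φ d' s i]) (by simpa using hlen)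
      (fun y hy => hρ y (by simp [hy]))]
    exact col_sel hi

private lemma emb_append (F₀ : Set ℕ) (m : ℕ) (φ : List ℕ → ℕ) :
    ∀ (ρ : List ℕ) (d : ℕ) (s : List ℕ) (i : ℕ),
      emb F₀ m φ d s (ρ ++ [i]) =
        emb F₀ m φ d s ρ ++ [sel F₀ m φ (d - ρ.length - 1) (emb F₀ m φ d s ρ) i] := by
  intro ρ
  induction ρ with
  | nil => intro d s i; simp [emb]
  | cons j ρ ih =>
    intro d s i
    have : (j :: ρ) ++ [i] = j :: (ρ ++ [i]) := rfl
    rw [this, emb, ih, emb]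
    have : d - (j :: ρ).length - 1 = (d - 1) - ρ.length - 1 := by
      simp; omega
    rw [this]

/-- The splitting lemma: if dense functions for `F` always exist and
`F = F₀ ∪ F₁`, then every `2m`-dense function for `F` and a decreasing
sequence `⟨t i : i < l⟩` induces an `m`-dense function for `F₀` or for `F₁`
and the same sequence. -/
theorem stmt12 {T : Type*} [LinearOrder T] (a b : T → ℕ → ℤ)
    (F F₀ F₁ : Set ℕ) (hF : F = F₀ ∪ F₁)
    (hEx : ∀ (l m : ℕ) (t : ℕ → T), (∀ i j, i < j → j < l → t j < t i) →
      ∃ φ, mDense a b F l m t φ)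
    (l m : ℕ) (t : ℕ → T) (ht : ∀ i j, i < j → j < l → t j < t i)
    (φ : List ℕ → ℕ) (hφ : mDense a b F l (2 * m) t φ) :
    ∃ ψ : List ℕ → ℕ,
      (∀ ρ : List ℕ, ρ.length ≤ l → (∀ x ∈ ρ, x < m) →
        ∃ σ : List ℕ, σ.length ≤ l ∧ (∀ x ∈ σ, x < 2 * m) ∧ ψ ρ = φ σ) ∧
      (mDense a b F₀ l m t ψ ∨ mDense a b F₁ l m t ψ) := by
  classical
  obtain ⟨hφ1, hφ2, hφ3⟩ := hφ
  set ψ : List ℕ → ℕ := fun ρ => φ (emb F₀ m φ l [] ρ) with hψ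
  refine ⟨ψ, ?_, ?_⟩
  · intro ρ hlen hρ
    refine ⟨emb F₀ m φ l [] ρ, ?_, ?_, rfl⟩
    · rw [emb_length]; simpa using hlen
    · intro x hx
      rcases emb_mem F₀ m φ ρ l [] hρ x hx with h | h
      · simp at h
      · exact h
  · -- properties of the image node
    have hσlen : ∀ ρ : List ℕ, (emb F₀ m φ l [] ρ).length = ρ.length := by
      intro ρ; rw [emb_length]; simp
    have hσmem : ∀ ρ : List ℕ, (∀ x ∈ ρ, x < m) →
        ∀ x ∈ emb F₀ m φ l [] ρ, x < 2*m := by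
      intro ρ hρ x hx
      rcases emb_mem F₀ m φ ρ l [] hρ x hx with h | h
      · simp at h
      · exact h
    -- monotonicity (b) holds for ψ regardless of the color
    have hb : ∀ ρ : List ℕ, ρ.length < l → (∀ x ∈ ρ, x < m) →
        ∀ i j, i < j → j < m → ψ (ρ ++ [i]) < ψ (ρ ++ [j]) := by
      intro ρ hlen hρ i j hij hj
      have hi : i < m := lt_trans hij hj
      simp only [hψ]
      rw [emb_append, emb_append]
      set σ := emb F₀ m φ l [] ρ
      set d := l - ρ.length - 1
      exact hφ2 σ (by rw [hσlen]; exact hlen) (hσmem ρ hρ) _ _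
        (sel_strictMono hij hj) (sel_lt hj)
    -- nesting (c) holds for ψ regardless of the color
    have hc : ∀ k, k + 1 < l → ∀ ρ : List ℕ, ρ.length = k → (∀ x ∈ ρ, x < m) →
        ∀ i < m,
        Icc (a (t (k+1)) (ψ (ρ ++ [i]))) (b (t (k+1)) (ψ (ρ ++ [i]))) ⊆
          Icc (a (t k) (ψ ρ)) (b (t k) (ψ ρ)) := by
      intro k hk ρ hlen hρ i hi
      simp only [hψ]
      rw [emb_append]
      exact hφ3 k hk _ (by rw [hσlen, hlen]) (hσmem ρ hρ) _
        (sel_lt hi)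
    -- leaf colors
    have hleaf : ∀ ρ : List ℕ, ρ.length = l → (∀ x ∈ ρ, x < m) →
        (col F₀ m φ 0 (emb F₀ m φ l [] ρ) = col F₀ m φ l []) := by
      intro ρ hlen hρ
      have := col_emb F₀ m φ ρ l [] (le_of_eq hlen) hρ
      rwa [hlen, Nat.sub_self] at this
    have hleafF : ∀ ρ : List ℕ, ρ.length = l → (∀ x ∈ ρ, x < m) →
        ψ ρ ∈ F := by
      intro ρ hlen hρ
      exact hφ1 _ (by rw [hσlen, hlen]) (hσmem ρ hρ)
    by_cases hcol : col F₀ m φ l [] = true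
    · left
      refine ⟨?_, hb, hc⟩
      intro ρ hlen hρ
      have h0 := hleaf ρ hlen hρ
      rw [hcol, col] at h0
      by_contra hmem
      rw [if_neg hmem] at h0
      exact Bool.false_ne_true h0
    · right
      refine ⟨?_, hb, hc⟩
      intro ρ hlen hρ
      have h0 := hleaf ρ hlen hρ
      rw [Bool.not_eq_true] at hcol
      rw [hcol, col] at h0
      have hmem : φ (emb F₀ m φ l [] ρ) ∉ F₀ := by
        intro hmem
        rw [if_pos hmem] at h0
        exact Bool.false_ne_true h0.symm
      have hFmem := hleafF ρ hlen hρ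
      rw [hF] at hFmem
      rcases hFmem with h | h
      · exact absurd h hmem
      · exact h
end

section
/- Let E ⊆ ω₂ × ω₂ be a symmetric relation that is not representable by sets of naturals, i.e. there is no φ : ω₂ → P(ℕ) with (α,β) ∈ E ↔ φ(α) ∩ φ(β) infinite. Then there is no map ψ : ω₂ → P(ℚ²) assigning to each α a sequence of rational open intervals whose union O_α satisfies: (α,β) ∈ E iff O_α ∩ O_β is unbounded in [0,∞). More precisely: if the assignment α ↦ O_α (each O_α a union of countably many rational intervals (a_n, b_n) with b_n < a_{n+1}) satisfied the equivalence '(α,β) ∈ E ↔ O_α ∩ O_β unbounded in [0,∞)', then E would be representable by sets of naturals via a coding, giving a contradiction. -/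
/-!
By local finiteness, when `O_α` and `O_β` are unbounded, `O_α ∩ O_β` is unbounded iff infinitely
many of the intervals `(a_{α,n}, b_{α,n})` meet `O_β`. This asymmetric condition becomes a common
element of two sets of naturals: `α` contributes each of its own intervals `I` paired with every
subset of `{0, …, code I - 1}`, and each rational interval `I` meeting `O_α` paired with the set
of codes below `code I` of its own intervals. A common element arises from an interval of one side
meeting the other set, or from an `I` below which the two sets of own intervals have the same
codes; for distinct sets of intervals only finitely many `I` are of the latter kind. Bounded
`O_α` are sent to `∅`.
-/

open Set Cardinal

/-- The set of ordinals below `ω₂`. -/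
noncomputable def Omega2 : Type 1 := {o : Ordinal // o < (Cardinal.aleph 2).ord}

open Encodable Filter

section Pieces

variable {X ι : Type*} [Encodable ι]

lemma finite_setOf_fst_mem_snd_subset_range {F : Set ι} (hF : F.Finite) :
    {c : ι × Finset ℕ | c.1 ∈ F ∧ c.2 ⊆ Finset.range (encode c.1)}.Finite :=
  (hF.biUnion fun i _ => (finite_singleton i).prod
    (Finset.range (encode i)).powerset.finite_toSet).subset
    fun _ hc => mem_biUnion hc.1 ⟨rfl, Finset.mem_powerset.2 hc.2⟩

def pieceCodes (σ μ : X → Set ι) (x : X) : Set (ι × Finset ℕ) :=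
  {c | c.1 ∈ σ x ∧ c.2 ⊆ Finset.range (encode c.1)} ∪
    {c | c.1 ∈ μ x ∧ ↑c.2 = encode '' σ x ∩ Iio (encode c.1)}

lemma infinite_pieceCodes_inter {σ μ : X → Set ι} {x y : X} (h : (σ y ∩ μ x).Infinite) :
    (pieceCodes σ μ x ∩ pieceCodes σ μ y).Infinite := by
  have htag : ∀ n, (encode '' σ x ∩ Iio n).Finite :=
    fun n => (finite_Iio n).subset inter_subset_right
  have hinj : InjOn (fun i => (i, (htag (encode i)).toFinset)) (σ y ∩ μ x) :=
    fun _ _ _ _ hij => congrArg Prod.fst hij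
  refine (h.image hinj).mono ?_
  rintro _ ⟨i, ⟨hσ, hμ⟩, rfl⟩
  refine ⟨Or.inr ⟨hμ, (htag _).coe_toFinset⟩, Or.inl ⟨hσ, fun n hn => ?_⟩⟩
  simpa using ((htag _).mem_toFinset.1 hn).2

lemma finite_pieceCodes_inter {σ μ : X → Set ι} (hσμ : ∀ x, σ x ⊆ μ x) {x y : X} (hne : σ x ≠ σ y)
    (hxy : (σ x ∩ μ y).Finite) (hyx : (σ y ∩ μ x).Finite) :
    (pieceCodes σ μ x ∩ pieceCodes σ μ y).Finite := by
  obtain ⟨i₀, hi₀⟩ : ∃ i₀, ¬(i₀ ∈ σ x ↔ i₀ ∈ σ y) := by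
    by_contra! h
    exact hne (ext h)
  have hsmall : {i : ι | encode i ≤ encode i₀}.Finite :=
    (finite_Iic _).preimage encode_injective.injOn
  refine (finite_setOf_fst_mem_snd_subset_range ((hxy.union hyx).union hsmall)).subset ?_
  rintro c ⟨⟨hx, hrx⟩ | ⟨hx, htx⟩, ⟨hy, hry⟩ | ⟨hy, hty⟩⟩
  · exact ⟨Or.inl (Or.inl ⟨hx, hσμ y hy⟩), hrx⟩
  · exact ⟨Or.inl (Or.inl ⟨hx, hy⟩), hrx⟩
  · exact ⟨Or.inl (Or.inr ⟨hy, hx⟩), hry⟩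
  · have hrange : c.2 ⊆ Finset.range (encode c.1) := fun n hn => by
      have hn' : n ∈ (c.2 : Set ℕ) := hn
      rw [htx] at hn'
      simpa using hn'.2
    refine ⟨Or.inr (show encode c.1 ≤ encode i₀ from not_lt.1 fun hlt => hi₀ ?_), hrange⟩
    have h := congrArg (encode i₀ ∈ ·) (htx.symm.trans hty)
    simpa [encode_injective.mem_set_image, hlt] using h

theorem exists_forall_iff_infinite_inter (R : X → X → Prop) (σ μ : X → Set ι)
    (hsymm : ∀ x y, R x y → R y x) (hdiag : ∀ x y, R x y → R x x) (hσμ : ∀ x, σ x ⊆ μ x)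
    (hR : ∀ x y, R x x → R y y → (R x y ↔ (σ x ∩ μ y).Infinite)) :
    ∃ φ : X → Set ℕ, ∀ x y, R x y ↔ (φ x ∩ φ y).Infinite := by
  classical
  refine ⟨fun x => if R x x then encode '' pieceCodes σ μ x else ∅, fun x y => ?_⟩
  by_cases hx : R x x
  swap
  · simpa [hx] using fun hxy => hx (hdiag x y hxy)
  by_cases hy : R y y
  swap
  · simpa [hy] using fun hxy => hy (hdiag y x (hsymm x y hxy))
  simp only [hx, hy, if_true]
  rw [← image_inter encode_injective, infinite_image_iff encode_injective.injOn]
  refine ⟨fun hxy => infinite_pieceCodes_inter ((hR y x hy hx).1 (hsymm x y hxy)), fun hinf => ?_⟩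
  by_contra hxy
  have hne : σ x ≠ σ y := fun he => hxy <| (hR x y hx hy).2 <| by
    rw [he]; exact (hR y y hy hy).1 hy
  exact hinf <| finite_pieceCodes_inter hσμ hne (not_infinite.1 (mt (hR x y hx hy).2 hxy))
    (not_infinite.1 (mt (hR y x hy hx).2 (mt (hsymm y x) hxy)))

end Pieces

section IntervalUnion

def intervalUnion (a b : ℕ → ℚ) : Set ℝ := ⋃ n, Ioo (a n : ℝ) (b n)

def meetingIntervals (S : Set ℝ) : Set (ℚ × ℚ) := {p | (Ioo (p.1 : ℝ) p.2 ∩ S).Nonempty}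

variable {a b : ℕ → ℚ}

lemma range_subset_meetingIntervals (hab : ∀ n, a n < b n) :
    range (fun n => (a n, b n)) ⊆ meetingIntervals (intervalUnion a b) := by
  rintro _ ⟨n, rfl⟩
  obtain ⟨x, hx⟩ := nonempty_Ioo.2 (Rat.cast_lt.2 (hab n) : (a n : ℝ) < b n)
  exact ⟨x, hx, mem_iUnion_of_mem n hx⟩

lemma tendsto_atTop_of_not_bddAbove_intervalUnion (hab : ∀ n, a n < b n)
    (hloc : ∀ n, b n < a (n + 1)) (hu : ¬BddAbove (intervalUnion a b)) :
    Tendsto (fun n => (a n : ℝ)) atTop atTop := by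
  refine tendsto_atTop_atTop_of_monotone
    (monotone_nat_of_le_succ fun n => by exact_mod_cast ((hab n).trans (hloc n)).le) fun M => ?_
  by_contra! h
  refine hu ⟨M, fun x hx => ?_⟩
  obtain ⟨n, hn⟩ := mem_iUnion.1 hx
  exact hn.2.le.trans ((Rat.cast_lt.2 (hloc n)).trans (h (n + 1))).le

lemma bddAbove_intervalUnion_inter_of_finite {S : Set ℝ}
    (h : (range (fun n => (a n, b n)) ∩ meetingIntervals S).Finite) :
    BddAbove (intervalUnion a b ∩ S) := by
  refine (h.bddAbove_biUnion.2 fun (p : ℚ × ℚ) _ =>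
    bddAbove_Ioo (a := (p.1 : ℝ)) (b := p.2)).mono ?_
  rintro x ⟨hx, hxS⟩
  obtain ⟨n, hn⟩ := mem_iUnion.1 hx
  exact mem_biUnion ⟨mem_range_self n, x, hn, hxS⟩ hn

lemma finite_of_bddAbove_intervalUnion_inter (hab : ∀ n, a n < b n)
    (hloc : ∀ n, b n < a (n + 1)) (hu : ¬BddAbove (intervalUnion a b)) {S : Set ℝ}
    (h : BddAbove (intervalUnion a b ∩ S)) :
    (range (fun n => (a n, b n)) ∩ meetingIntervals S).Finite := by
  obtain ⟨R, hR⟩ := h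
  have hlow : {n | ¬R ≤ a n}.Finite := by
    rw [← eventually_cofinite, Nat.cofinite_eq_atTop]
    exact (tendsto_atTop_of_not_bddAbove_intervalUnion hab hloc hu).eventually_ge_atTop R
  refine (hlow.image fun n => (a n, b n)).subset ?_
  rintro _ ⟨⟨n, rfl⟩, x, hx, hxS⟩
  have hxR : x ≤ R := hR ⟨mem_iUnion_of_mem n hx, hxS⟩
  exact ⟨n, fun hn => ((hx.1 : (a n : ℝ) < x).trans_le hxR).not_ge hn, rfl⟩

lemma not_bddAbove_intervalUnion_inter_iff (hab : ∀ n, a n < b n)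
    (hloc : ∀ n, b n < a (n + 1)) (hu : ¬BddAbove (intervalUnion a b)) (S : Set ℝ) :
    ¬BddAbove (intervalUnion a b ∩ S) ↔
      (range (fun n => (a n, b n)) ∩ meetingIntervals S).Infinite :=
  ⟨fun h hfin => h (bddAbove_intervalUnion_inter_of_finite hfin),
    fun h hb => h (finite_of_bddAbove_intervalUnion_inter hab hloc hu hb)⟩

end IntervalUnion

/-- If a symmetric relation `E` on `ω₂` is not representable by sets of
naturals (via infinite intersections), then no assignment `α ↦ O_α` of open
subsets of the half line, each a locally finite union of rational open
intervals, can satisfy `(α,β) ∈ E ↔ O_α ∩ O_β` unbounded in `[0,∞)`. -/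
theorem stmt15 (E : Set (Omega2 × Omega2))
    (hsymm : ∀ α β, (α, β) ∈ E → (β, α) ∈ E)
    (hrep : ¬ ∃ φ : Omega2 → Set ℕ,
      ∀ α β, (α, β) ∈ E ↔ (φ α ∩ φ β).Infinite)
    (a b : Omega2 → ℕ → ℚ)
    (hab : ∀ α n, a α n < b α n)
    (hloc : ∀ α n, b α n < a α (n + 1)) :
    ¬ ∀ α β, (α, β) ∈ E ↔
        ¬ BddAbove ((⋃ n, Ioo ((a α n : ℝ)) ((b α n : ℝ))) ∩
                    (⋃ n, Ioo ((a β n : ℝ)) ((b β n : ℝ)))) := by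
  intro h
  have hE : ∀ α β, (α, β) ∈ E ↔
      ¬BddAbove (intervalUnion (a α) (b α) ∩ intervalUnion (a β) (b β)) := h
  have hunbdd : ∀ α β, (α, β) ∈ E → ¬BddAbove (intervalUnion (a α) (b α)) :=
    fun α β hαβ hb => (hE α β).1 hαβ (hb.mono inter_subset_left)
  refine hrep (exists_forall_iff_infinite_inter (fun α β => (α, β) ∈ E)
    (fun α => range fun n => (a α n, b α n)) (fun α => meetingIntervals (intervalUnion (a α) (b α)))
    hsymm (fun α β hαβ => (hE α α).2 ?_) (fun α => range_subset_meetingIntervals (hab α))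
    fun α β hα _ => ?_)
  · rw [inter_self]
    exact hunbdd α β hαβ
  · exact (hE α β).trans
      (not_bddAbove_intervalUnion_inter_iff (hab α) (hloc α) (hunbdd α α hα) _)
end

section
/- With E ⊆ [0,1]² symmetric, x_α distinct points of [0,1], and D^E_{x,a} = D_{x,a} ∩ C_E, the sets D^E_{x_α,a} represent E: D^E_{x_α,a} ∩ D^E_{x_β,a} ≠ ∅ if and only if (x_α, x_β) ∈ E, for any fixed a ∈ (0,1] and α ≠ β. -/
open Set

/-- The set `C = [0,1] × [0,1]`. -/
def combC : Set (ℝ × ℝ) := Icc 0 1 ×ˢ Icc 0 1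

/-- The cross-shaped set `D_{x,a} = ({x} × [a,1] × C) ∪ (C × {x} × [a,1]) ⊆ C²`. -/
def crossD (x a : ℝ) : Set ((ℝ × ℝ) × (ℝ × ℝ)) :=
  (({x} ×ˢ Icc a 1) ×ˢ combC) ∪ (combC ×ˢ ({x} ×ˢ Icc a 1))

/-- The set `C_E = {(x,s,y,t) ∈ C² : s > 0 ∧ t > 0 → (x,y) ∈ E ∨ (y,x) ∈ E}`. -/
def CEset (E : Set (ℝ × ℝ)) : Set ((ℝ × ℝ) × (ℝ × ℝ)) :=
  {p ∈ combC ×ˢ combC |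
    0 < p.1.2 ∧ 0 < p.2.2 → (p.1.1, p.2.1) ∈ E ∨ (p.2.1, p.1.1) ∈ E}

/-- The sets `D^E_{x_α,a} = D_{x_α,a} ∩ C_E` represent `E`:
`D^E_{x_α,a} ∩ D^E_{x_β,a} ≠ ∅ iff (x_α, x_β) ∈ E`, for distinct `x_α, x_β`
and `a ∈ (0,1]`. -/
theorem stmt17 (E : Set (ℝ × ℝ)) (hsymm : ∀ x y, (x, y) ∈ E → (y, x) ∈ E)
    (hirr : ∀ x, (x, x) ∉ E)
    (xα xβ : ℝ) (hxα : xα ∈ Icc (0:ℝ) 1) (hxβ : xβ ∈ Icc (0:ℝ) 1)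
    (hne : xα ≠ xβ) (a : ℝ) (ha : a ∈ Ioc (0:ℝ) 1) :
    ((crossD xα a ∩ CEset E) ∩ (crossD xβ a ∩ CEset E)).Nonempty ↔
      (xα, xβ) ∈ E := by
  obtain ⟨ha0, ha1⟩ := ha
  constructor
  · rintro ⟨p, ⟨⟨hDα, hC⟩, hDβ, -⟩⟩
    have hC' := hC.2
    rcases hDα with ⟨⟨h1, hs⟩, -⟩ | ⟨-, h2, ht⟩ <;>
      rcases hDβ with ⟨⟨h1', hs'⟩, -⟩ | ⟨-, h2', ht'⟩
    · exact absurd (h1.symm.trans h1') hne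
    · have := hC' ⟨lt_of_lt_of_le ha0 hs.1, lt_of_lt_of_le ha0 ht'.1⟩
      rw [h1, h2'] at this
      rcases this with h | h
      · exact h
      · exact hsymm _ _ h
    · have := hC' ⟨lt_of_lt_of_le ha0 hs'.1, lt_of_lt_of_le ha0 ht.1⟩
      rw [h1', h2] at this
      rcases this with h | h
      · exact hsymm _ _ h
      · exact h
    · exact absurd (h2.symm.trans h2') hne
  · intro hE
    refine ⟨((xα, a), (xβ, a)), ⟨⟨?_, ?_⟩, ?_, ?_⟩⟩
    · exact Or.inl ⟨⟨rfl, le_refl a, ha1⟩, hxβ, ⟨ha0.le, ha1⟩⟩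
    · exact ⟨⟨⟨hxα, ha0.le, ha1⟩, hxβ, ha0.le, ha1⟩, fun _ => Or.inl hE⟩
    · exact Or.inr ⟨⟨hxα, ⟨ha0.le, ha1⟩⟩, rfl, le_refl a, ha1⟩
    · exact ⟨⟨⟨hxα, ha0.le, ha1⟩, hxβ, ha0.le, ha1⟩, fun _ => Or.inl hE⟩
end
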